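/- arXiv:1701.06140 — 6 statements merged into one kernel-verified Lean document; each statement's English description precedes it below -/
import Mathlib

section
/- Let U be a complex Banach space, ψ : U → U a continuous linear operator and s ∈ U such that the evolution Ψ = (ψ, s) is stable. Then for every vector s' in the evolution space U_Ψ (the linear span of {ψ^t s : t ≥ 0}), the evolution (ψ, s') is also stable, i.e., there exists a constant c' ∈ ℝ with ‖ψ^t s'‖ ≤ c'‖s'‖ for all t ≥ 0. -/
open Filter Finset

/-- If the evolution `(ψ, s)` in a complex Banach space is stable, then for
every `s'` in the evolution space (the linear span of `{ψ^t s : t ≥ 0}`) the evolution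
`(ψ, s')` is stable. -/
theorem stable_of_mem_evolutionSpace
    {U : Type*} [NormedAddCommGroup U] [NormedSpace ℂ U] [CompleteSpace U]
    (ψ : U →L[ℂ] U) (s : U)
    (hstable : ∃ c : ℝ, ∀ t : ℕ, ‖(ψ ^ t) s‖ ≤ c * ‖s‖) :
    ∀ s' ∈ Submodule.span ℂ (Set.range fun t : ℕ => (ψ ^ t) s),
      ∃ c' : ℝ, ∀ t : ℕ, ‖(ψ ^ t) s'‖ ≤ c' * ‖s'‖ := by
  obtain ⟨c, hc⟩ := hstable
  intro s' hs'
  have key : ∃ C : ℝ, ∀ t : ℕ, ‖(ψ ^ t) s'‖ ≤ C := by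
    induction hs' using Submodule.span_induction with
    | mem x hx =>
      obtain ⟨k, rfl⟩ := hx
      refine ⟨c * ‖s‖, fun t => ?_⟩
      have : (ψ ^ t) ((ψ ^ k) s) = (ψ ^ (t + k)) s := by
        rw [pow_add]; rfl
      rw [this]; exact hc _
    | zero => exact ⟨0, fun t => by simp⟩
    | add x y _ _ hx hy =>
      obtain ⟨Cx, hCx⟩ := hx
      obtain ⟨Cy, hCy⟩ := hy
      refine ⟨Cx + Cy, fun t => ?_⟩
      calc ‖(ψ ^ t) (x + y)‖ ≤ ‖(ψ ^ t) x‖ + ‖(ψ ^ t) y‖ := by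
            rw [map_add]; exact norm_add_le _ _
        _ ≤ Cx + Cy := add_le_add (hCx t) (hCy t)
    | smul a x _ hx =>
      obtain ⟨Cx, hCx⟩ := hx
      refine ⟨‖a‖ * Cx, fun t => ?_⟩
      rw [map_smul, norm_smul]
      have h0 : (0:ℝ) ≤ ‖(ψ ^ t) x‖ := norm_nonneg _
      exact mul_le_mul_of_nonneg_left (hCx t) (norm_nonneg a)
  obtain ⟨C, hC⟩ := key
  by_cases h : s' = 0
  · exact ⟨0, fun t => by simp [h]⟩
  · refine ⟨C / ‖s'‖, fun t => ?_⟩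
    rw [div_mul_cancel₀]
    · exact hC t
    · exact norm_ne_zero_iff.mpr h
end

section
/- Let U be a complex Banach space, ψ : U → U a continuous linear operator and s ∈ U such that the evolution Ψ = (ψ, s) is stable. If λ ∈ ℂ is an eigenvalue of ψ admitting a nonzero eigenvector x ∈ U_Ψ (i.e., x lies in the linear span of {ψ^t s : t ≥ 0} and ψ x = λ x), then |λ| ≤ 1. -/
open Filter Finset

/-- If the evolution `(ψ, s)` in a complex Banach space is stable, then the
restriction of `ψ` to the evolution space admits no eigenvalue `λ` with `|λ| > 1`: any
nonzero eigenvector `x` in the span of `{ψ^t s : t ≥ 0}` with `ψ x = λ x` has `|λ| ≤ 1`. -/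
theorem eigenvalue_le_one_of_stable
    {U : Type*} [NormedAddCommGroup U] [NormedSpace ℂ U] [CompleteSpace U]
    (ψ : U →L[ℂ] U) (s : U)
    (hstable : ∃ c : ℝ, ∀ t : ℕ, ‖(ψ ^ t) s‖ ≤ c * ‖s‖)
    (lam : ℂ) (x : U)
    (hx : x ∈ Submodule.span ℂ (Set.range fun t : ℕ => (ψ ^ t) s))
    (hx0 : x ≠ 0) (heig : ψ x = lam • x) :
    ‖lam‖ ≤ 1 := by
  by_contra h
  push_neg at h
  obtain ⟨c, hc⟩ := hstable
  rw [Finsupp.mem_span_range_iff_exists_finsupp] at hx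
  obtain ⟨f, hf⟩ := hx
  set M : ℝ := ∑ t ∈ f.support, ‖f t‖ * (c * ‖s‖) with hM
  have hxpos : 0 < ‖x‖ := norm_pos_iff.mpr hx0
  obtain ⟨n, hn⟩ := pow_unbounded_of_one_lt (M / ‖x‖) h
  have hpow : ∀ m : ℕ, (ψ ^ m) x = lam ^ m • x := by
    intro m
    induction m with
    | zero => simp
    | succ k ih =>
      rw [pow_succ', ContinuousLinearMap.mul_apply, ih, map_smul, heig, smul_smul,
        pow_succ, mul_comm]
  have hbound : ‖(ψ ^ n) x‖ ≤ M := by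
    rw [← hf, map_finsuppSum]
    refine le_trans (norm_sum_le _ _) (Finset.sum_le_sum ?_)
    intro t ht
    simp only [map_smul, norm_smul]
    refine mul_le_mul_of_nonneg_left ?_ (norm_nonneg _)
    have : (ψ ^ n) ((ψ ^ t) s) = (ψ ^ (n + t)) s := by
      rw [pow_add, ContinuousLinearMap.mul_apply]
    rw [this]
    exact hc _
  rw [hpow n, norm_smul, norm_pow] at hbound
  have : M < ‖lam‖ ^ n * ‖x‖ := (div_lt_iff₀ hxpos).mp hn
  linarith
end

section
/- Let U be a complex Banach space and Φ = (φ, v) a finite-dimensional evolution in U, i.e., the linear span U_Φ of {φ^t v : t ≥ 0} is finite-dimensional. Then Φ is mean ergodic if and only if Φ is stable. -/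
/-!
Mean ergodicity and stability both force the orbit to grow sublinearly, `φ^t v / t → 0`. The
vectors with sublinearly growing orbit form a `φ`-invariant subspace, which therefore contains the
finite-dimensional span of the orbit of `v`; that span splits into generalized eigenvectors of `φ`.
A generalized eigenvector for `‖μ‖ < 1` has orbit tending to `0`. For `‖μ‖ ≥ 1`, sublinear growth
forces `‖μ‖ = 1` and excludes Jordan chains of length two (along which `φ^t` grows like `t μ^t`),
so the vector is an eigenvector of a unimodular eigenvalue: its orbit is bounded, and its averages
converge, trivially if `μ = 1` and to `0` otherwise, since it then lies in the range of `φ - 1`.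
-/

open Filter Finset Topology

theorem le_one_of_tendsto_pow_div {r : ℝ} (h : Tendsto (fun n : ℕ => r ^ n / n) atTop (𝓝 0)) :
    r ≤ 1 := by
  by_contra! hr
  have hbound : ∀ᶠ n : ℕ in atTop, r - 1 ≤ r ^ n / n := by
    filter_upwards [eventually_gt_atTop 0] with n hn
    rw [le_div_iff₀ (by positivity)]
    nlinarith [one_add_mul_sub_le_pow (show -1 ≤ r by linarith) n,
      (Nat.one_le_cast (α := ℝ)).2 hn]
  linarith [ge_of_tendsto h hbound]

theorem tendsto_inv_add_one_smul_of_tendsto_cesaro {E : Type*} [NormedAddCommGroup E]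
    [NormedSpace ℝ E] {u : ℕ → E} {l : E}
    (h : Tendsto (fun n : ℕ => (n : ℝ)⁻¹ • ∑ k ∈ range n, u k) atTop (𝓝 l)) :
    Tendsto (fun n : ℕ => ((n : ℝ) + 1)⁻¹ • u n) atTop (𝓝 0) := by
  set A := fun n : ℕ => (n : ℝ)⁻¹ • ∑ k ∈ range n, u k
  have hdiff : ∀ n : ℕ, ((n : ℝ) + 1)⁻¹ • u n = A (n + 1) - ((n : ℝ) / (n + 1)) • A n := by
    intro n
    rcases eq_or_ne n 0 with rfl | hn
    · simp [A]
    simp only [A, sum_range_succ, Nat.cast_succ, smul_add, smul_smul]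
    rw [div_mul_eq_mul_div, mul_inv_cancel₀ (Nat.cast_ne_zero.2 hn), one_div]
    abel
  have hlim :=
    (h.comp (tendsto_add_atTop_nat 1)).sub ((tendsto_natCast_div_add_atTop (1 : ℝ)).smul h)
  rw [one_smul, sub_self] at hlim
  exact hlim.congr fun n => (hdiff n).symm

theorem tendsto_choose_mul_pow_sub {r : ℝ} (hr : |r| < 1) (m : ℕ) :
    Tendsto (fun n : ℕ => (n.choose m : ℝ) * r ^ (n - m)) atTop (𝓝 0) := by
  have := (summable_choose_mul_geometric_of_norm_lt_one (R := ℝ) m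
    (by rwa [Real.norm_eq_abs])).tendsto_atTop_zero
  rw [← tendsto_add_atTop_iff_nat m]
  simp only [Nat.add_sub_cancel]
  exact this

namespace Module.End

section Algebra

variable {R M : Type*} [CommSemiring R] [AddCommMonoid M] [Module R M]
  {f : Module.End R M} {μ : R}

theorem pow_apply_of_apply_eq_smul {x : M} (h : f x = μ • x) (n : ℕ) : (f ^ n) x = μ ^ n • x := by
  induction n with
  | zero => simp
  | succ n ih => rw [pow_succ', mul_apply, ih, map_smul, h, smul_smul, pow_succ]

theorem smul_pow_apply_of_apply_eq_smul_add {x u : M} (hx : f x = μ • x + u) (hu : f u = μ • u)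
    (n : ℕ) : μ • (f ^ n) x = μ ^ (n + 1) • x + ((n : R) * μ ^ n) • u := by
  induction n with
  | zero => simp
  | succ n ih =>
    rw [pow_succ', mul_apply, ← map_smul, ih, map_add, map_smul, map_smul, hx, hu]
    push_cast
    module

theorem apply_mem_span_orbit {v x : M}
    (hx : x ∈ Submodule.span R (Set.range fun n : ℕ => (f ^ n) v)) :
    f x ∈ Submodule.span R (Set.range fun n : ℕ => (f ^ n) v) := by
  have : Submodule.span R (Set.range fun n : ℕ => (f ^ n) v) ≤
      (Submodule.span R (Set.range fun n : ℕ => (f ^ n) v)).comap f :=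
    Submodule.span_le.2 (Set.range_subset_iff.2 fun n =>
      Submodule.subset_span ⟨n + 1, by simp [pow_succ']⟩)
  exact this hx

end Algebra

theorem pow_apply_eq_sum_choose {R M : Type*} [CommRing R] [AddCommGroup M] [Module R M]
    (f : Module.End R M) (μ : R) (x : M) (n : ℕ) :
    (f ^ n) x = ∑ m ∈ range (n + 1), ((n.choose m : R) * μ ^ (n - m)) • ((f - μ • 1) ^ m) x := by
  have hc : Commute (f - μ • 1) (μ • 1) := (Commute.one_right _).smul_right μ
  conv_lhs => rw [← sub_add_cancel f (μ • 1), hc.add_pow]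
  simp [LinearMap.sum_apply, smul_pow, mul_smul, smul_comm (μ ^ _), Nat.cast_smul_eq_nsmul]

theorem _root_.Submodule.eq_iSup_inf_maxGenEigenspace {K V : Type*} [Field K] [IsAlgClosed K]
    [AddCommGroup V] [Module K V] {f : Module.End K V} {p : Submodule K V} [FiniteDimensional K p]
    (h : ∀ x ∈ p, f x ∈ p) : p = ⨆ μ, p ⊓ f.maxGenEigenspace μ := by
  calc p = (⊤ : Submodule K p).map p.subtype := (Submodule.map_subtype_top p).symm
    _ = ⨆ μ, (maxGenEigenspace (f.restrict h) μ).map p.subtype := by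
      rw [← Submodule.map_iSup, iSup_maxGenEigenspace_eq_top]
    _ = ⨆ μ, p ⊓ f.maxGenEigenspace μ := by simp_rw [Submodule.inf_genEigenspace f p h]

end Module.End

section Orbits

variable {U : Type*} [NormedAddCommGroup U] [NormedSpace ℂ U]

namespace Module.End

variable (f : Module.End ℂ U)

theorem birkhoffAverage_self_apply (n : ℕ) (x : U) :
    birkhoffAverage ℝ f f n x = (n : ℝ)⁻¹ • ∑ k ∈ range n, (f ^ (k + 1)) x := by
  simp [birkhoffAverage, birkhoffSum, pow_succ', Module.End.coe_pow]

def sublinearOrbits : Submodule ℂ U where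
  carrier := {x | Tendsto (fun n : ℕ => (n : ℝ)⁻¹ • (f ^ n) x) atTop (𝓝 0)}
  zero_mem' := by simp
  add_mem' hx hy := by simpa [smul_add] using hx.add hy
  smul_mem' c x hx := by simpa [smul_comm _ c] using hx.const_smul c

def boundedOrbits : Submodule ℂ U where
  carrier := {x | ∃ C, ∀ n : ℕ, ‖(f ^ n) x‖ ≤ C}
  zero_mem' := ⟨0, by simp⟩
  add_mem' := by
    rintro x y ⟨C, hC⟩ ⟨D, hD⟩
    exact ⟨C + D, fun n =>
      (map_add (f ^ n) x y ▸ norm_add_le _ _).trans (add_le_add (hC n) (hD n))⟩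
  smul_mem' c x := by
    rintro ⟨C, hC⟩
    exact ⟨‖c‖ * C, fun n => by rw [map_smul, norm_smul]; gcongr; exact hC n⟩

/-- `birkhoffAverage ℝ f f n x` is the state average `n⁻¹ ∑_{m=1}^n f^m x`. -/
def cesaroConvergent : Submodule ℂ U where
  carrier := {x | ∃ y, Tendsto (birkhoffAverage ℝ f f · x) atTop (𝓝 y)}
  zero_mem' := ⟨0, by simp [birkhoffAverage_self_apply]⟩
  add_mem' := by
    rintro x y ⟨a, ha⟩ ⟨b, hb⟩
    exact ⟨a + b, by simpa [birkhoffAverage_self_apply, sum_add_distrib] using ha.add hb⟩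
  smul_mem' c x := by
    rintro ⟨a, ha⟩
    exact ⟨c • a, by
      simpa [birkhoffAverage_self_apply, ← smul_sum, smul_comm _ c] using ha.const_smul c⟩

variable {f}

theorem mem_sublinearOrbits {x : U} :
    x ∈ f.sublinearOrbits ↔ Tendsto (fun n : ℕ => (n : ℝ)⁻¹ • (f ^ n) x) atTop (𝓝 0) :=
  Iff.rfl

theorem boundedOrbits_le_sublinearOrbits : f.boundedOrbits ≤ f.sublinearOrbits := by
  rintro x ⟨C, hC⟩
  refine squeeze_zero_norm (fun n => ?_) (tendsto_const_div_atTop_nhds_zero_nat C)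
  rw [norm_smul, norm_inv, Real.norm_natCast, inv_mul_eq_div]
  gcongr
  exact hC n

theorem cesaroConvergent_le_sublinearOrbits : f.cesaroConvergent ≤ f.sublinearOrbits := by
  rintro x ⟨y, hy⟩
  simp only [birkhoffAverage_self_apply] at hy
  have := tendsto_inv_add_one_smul_of_tendsto_cesaro hy
  rw [mem_sublinearOrbits, ← tendsto_add_atTop_iff_nat 1]
  simpa using this

theorem apply_mem_sublinearOrbits (hf : Continuous f) {x : U} (hx : x ∈ f.sublinearOrbits) :
    f x ∈ f.sublinearOrbits := by
  have := (map_zero f ▸ hf.tendsto 0).comp hx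
  refine this.congr fun n => ?_
  simp [LinearMap.map_smul_of_tower, ← Module.End.mul_apply, ← pow_succ, pow_succ']

theorem span_orbit_le_sublinearOrbits (hf : Continuous f) {v : U} (hv : v ∈ f.sublinearOrbits) :
    Submodule.span ℂ (Set.range fun n : ℕ => (f ^ n) v) ≤ f.sublinearOrbits := by
  refine Submodule.span_le.2 (Set.range_subset_iff.2 fun n => ?_)
  induction n with
  | zero => simpa using hv
  | succ n ih => simpa [pow_succ'] using apply_mem_sublinearOrbits hf ih

theorem mem_cesaroConvergent_of_tendsto {x y : U}
    (h : Tendsto (fun n : ℕ => (f ^ n) x) atTop (𝓝 y)) :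
    x ∈ f.cesaroConvergent := by
  refine ⟨y, ?_⟩
  simp only [birkhoffAverage_self_apply]
  exact (h.comp (tendsto_add_atTop_nat 1)).cesaro_smul

theorem mem_boundedOrbits_of_tendsto {x y : U}
    (h : Tendsto (fun n : ℕ => (f ^ n) x) atTop (𝓝 y)) :
    x ∈ f.boundedOrbits := by
  obtain ⟨C, hC⟩ := h.norm.bddAbove_range
  exact ⟨C, fun n => hC ⟨n, rfl⟩⟩

theorem mem_cesaroConvergent_of_apply_eq {x : U} (h : f x = x) : x ∈ f.cesaroConvergent :=
  ⟨f x, Function.IsFixedPt.tendsto_birkhoffAverage ℝ h f⟩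

theorem apply_sub_mem_cesaroConvergent {y : U} (hy : y ∈ f.boundedOrbits) :
    f y - y ∈ f.cesaroConvergent := by
  obtain ⟨C, hC⟩ := hy
  refine ⟨0, ?_⟩
  have hbdd : Bornology.IsBounded (Set.range fun n : ℕ => f (f^[n] y)) := by
    refine isBounded_iff_forall_norm_le.2 ⟨C, ?_⟩
    rintro _ ⟨n, rfl⟩
    simpa [← Module.End.coe_pow, ← Module.End.mul_apply, ← pow_succ'] using hC (n + 1)
  refine (tendsto_birkhoffAverage_apply_sub_birkhoffAverage ℝ hbdd).congr fun n => ?_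
  simp [birkhoffAverage_self_apply, ← smul_sub, ← sum_sub_distrib]

variable {μ : ℂ} {x : U}

theorem apply_sub_smul_mem_sublinearOrbits (hf : Continuous f) (hx : x ∈ f.sublinearOrbits) :
    (f - μ • 1) x ∈ f.sublinearOrbits :=
  sub_mem (apply_mem_sublinearOrbits hf hx) (Submodule.smul_mem _ μ hx)

theorem norm_le_one_of_apply_eq_smul (hx : x ∈ f.sublinearOrbits) (hx0 : x ≠ 0)
    (hfx : f x = μ • x) : ‖μ‖ ≤ 1 := by
  refine le_one_of_tendsto_pow_div ?_
  have := (mem_sublinearOrbits.1 hx).norm.div_const ‖x‖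
  simp only [pow_apply_of_apply_eq_smul hfx, norm_smul, norm_inv, Real.norm_natCast, norm_pow,
    norm_zero, zero_div] at this
  refine this.congr fun n => ?_
  field_simp [norm_ne_zero_iff.2 hx0]

theorem eq_zero_of_apply_eq_smul_add {u : U} (hμ : ‖μ‖ = 1) (hx : x ∈ f.sublinearOrbits)
    (hfx : f x = μ • x + u) (hfu : f u = μ • u) : u = 0 := by
  have hbound : ∀ n : ℕ, 0 < n → ‖u‖ ≤ ‖(n : ℝ)⁻¹ • (f ^ n) x‖ + ‖x‖ / n := by
    intro n hn
    have hn' : (0 : ℝ) < n := Nat.cast_pos.2 hn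
    have h := smul_pow_apply_of_apply_eq_smul_add hfx hfu n
    have : (n : ℝ) * ‖u‖ ≤ ‖(f ^ n) x‖ + ‖x‖ := by
      calc (n : ℝ) * ‖u‖ = ‖((n : ℂ) * μ ^ n) • u‖ := by simp [norm_smul, hμ]
        _ = ‖μ • (f ^ n) x - μ ^ (n + 1) • x‖ := by rw [h, add_sub_cancel_left]
        _ ≤ ‖(f ^ n) x‖ + ‖x‖ := by
          simpa [norm_smul, hμ] using norm_sub_le (μ • (f ^ n) x) (μ ^ (n + 1) • x)
    rw [norm_smul, norm_inv, Real.norm_natCast, inv_mul_eq_div, ← add_div,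
      le_div_iff₀ hn', mul_comm]
    exact this
  have hlim := (mem_sublinearOrbits.1 hx).norm.add (tendsto_const_div_atTop_nhds_zero_nat ‖x‖)
  rw [norm_zero, zero_add] at hlim
  exact norm_le_zero_iff.1 (ge_of_tendsto hlim ((eventually_gt_atTop 0).mono hbound))

theorem norm_le_one_of_mem_maxGenEigenspace (hf : Continuous f) (hx : x ∈ f.sublinearOrbits)
    (hx0 : x ≠ 0) (hgen : x ∈ f.maxGenEigenspace μ) : ‖μ‖ ≤ 1 := by
  obtain ⟨k, hk⟩ := (mem_maxGenEigenspace f μ x).1 hgen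
  clear hgen
  induction k generalizing x with
  | zero => exact absurd (by simpa using hk) hx0
  | succ k ih =>
    by_cases hN : (f - μ • 1) x = 0
    · exact norm_le_one_of_apply_eq_smul hx hx0 (by simpa [sub_eq_zero] using hN)
    · exact ih (apply_sub_smul_mem_sublinearOrbits hf hx) hN (by rwa [← mul_apply, ← pow_succ])

theorem apply_eq_smul_of_mem_maxGenEigenspace (hf : Continuous f) (hμ : ‖μ‖ = 1)
    (hx : x ∈ f.sublinearOrbits) (hgen : x ∈ f.maxGenEigenspace μ) : f x = μ • x := by
  obtain ⟨k, hk⟩ := (mem_maxGenEigenspace f μ x).1 hgen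
  clear hgen
  suffices (f - μ • 1) x = 0 by simpa [sub_eq_zero] using this
  induction k generalizing x with
  | zero => simp_all
  | succ k ih =>
    have hNN := ih (apply_sub_smul_mem_sublinearOrbits hf hx) (by rwa [← mul_apply, ← pow_succ])
    exact eq_zero_of_apply_eq_smul_add hμ hx (by simp) (by simpa [sub_eq_zero] using hNN)

theorem tendsto_pow_apply_zero_of_mem_maxGenEigenspace (hμ : ‖μ‖ < 1)
    (hgen : x ∈ f.maxGenEigenspace μ) : Tendsto (fun n : ℕ => (f ^ n) x) atTop (𝓝 0) := by
  obtain ⟨k, hk⟩ := (mem_maxGenEigenspace f μ x).1 hgen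
  have hsum : ∀ n, k ≤ n + 1 → (f ^ n) x =
      ∑ m ∈ range k, ((n.choose m : ℂ) * μ ^ (n - m)) • ((f - μ • 1) ^ m) x := by
    intro n hn
    rw [pow_apply_eq_sum_choose f μ]
    refine (sum_subset (range_subset_range.2 hn) fun m _ hm => ?_).symm
    obtain ⟨j, rfl⟩ := Nat.exists_eq_add_of_le' (not_lt.1 (mem_range.not.1 hm))
    rw [pow_add, mul_apply, hk, map_zero, smul_zero]
  have hbound : Tendsto (fun n : ℕ => ∑ m ∈ range k,
      (n.choose m : ℝ) * ‖μ‖ ^ (n - m) * ‖((f - μ • 1) ^ m) x‖) atTop (𝓝 0) := by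
    simpa using tendsto_finsetSum (range k) fun m _ =>
      (tendsto_choose_mul_pow_sub (by rwa [abs_norm]) m).mul_const ‖((f - μ • 1) ^ m) x‖
  refine squeeze_zero_norm' ?_ hbound
  filter_upwards [eventually_ge_atTop k] with n hn
  rw [hsum n (by omega)]
  refine (norm_sum_le _ _).trans (sum_le_sum fun m _ => ?_)
  simp [norm_smul]

theorem mem_boundedOrbits_inf_cesaroConvergent_of_apply_eq_smul (hμ : ‖μ‖ = 1)
    (hfx : f x = μ • x) : x ∈ f.boundedOrbits ⊓ f.cesaroConvergent := by
  have hB : ∀ y : U, f y = μ • y → y ∈ f.boundedOrbits := fun y hy =>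
    ⟨‖y‖, fun n => by
      rw [pow_apply_of_apply_eq_smul hy, norm_smul, norm_pow, hμ, one_pow, one_mul]⟩
  refine Submodule.mem_inf.2 ⟨hB x hfx, ?_⟩
  rcases eq_or_ne μ 1 with rfl | hμ1
  · exact mem_cesaroConvergent_of_apply_eq (by simpa using hfx)
  · have hy : f ((μ - 1)⁻¹ • x) = μ • (μ - 1)⁻¹ • x := by rw [map_smul, hfx, smul_comm]
    have hxy : f ((μ - 1)⁻¹ • x) - (μ - 1)⁻¹ • x = x := by
      rw [hy, smul_smul, ← sub_smul, ← sub_one_mul, mul_inv_cancel₀ (sub_ne_zero.2 hμ1),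
        one_smul]
    simpa only [hxy] using apply_sub_mem_cesaroConvergent (hB _ hy)

theorem mem_boundedOrbits_inf_cesaroConvergent_of_mem_maxGenEigenspace (hf : Continuous f)
    (hx : x ∈ f.sublinearOrbits) (hgen : x ∈ f.maxGenEigenspace μ) :
    x ∈ f.boundedOrbits ⊓ f.cesaroConvergent := by
  rcases lt_or_ge ‖μ‖ 1 with hμ | hμ
  · have h := tendsto_pow_apply_zero_of_mem_maxGenEigenspace hμ hgen
    exact ⟨mem_boundedOrbits_of_tendsto h, mem_cesaroConvergent_of_tendsto h⟩
  rcases eq_or_ne x 0 with rfl | hx0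
  · exact zero_mem _
  have hμ1 : ‖μ‖ = 1 := le_antisymm (norm_le_one_of_mem_maxGenEigenspace hf hx hx0 hgen) hμ
  exact mem_boundedOrbits_inf_cesaroConvergent_of_apply_eq_smul hμ1
    (apply_eq_smul_of_mem_maxGenEigenspace hf hμ1 hx hgen)

theorem span_orbit_le_boundedOrbits_inf_cesaroConvergent (hf : Continuous f) {v : U}
    [FiniteDimensional ℂ (Submodule.span ℂ (Set.range fun n : ℕ => (f ^ n) v))]
    (hv : v ∈ f.sublinearOrbits) :
    Submodule.span ℂ (Set.range fun n : ℕ => (f ^ n) v) ≤ f.boundedOrbits ⊓ f.cesaroConvergent :=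
  ((Submodule.eq_iSup_inf_maxGenEigenspace fun _ => apply_mem_span_orbit).le).trans <|
    iSup_le fun _ _ hx => mem_boundedOrbits_inf_cesaroConvergent_of_mem_maxGenEigenspace hf
      (span_orbit_le_sublinearOrbits hf hv hx.1) hx.2

theorem mem_cesaroConvergent_iff_mem_boundedOrbits (hf : Continuous f) {v : U}
    [FiniteDimensional ℂ (Submodule.span ℂ (Set.range fun n : ℕ => (f ^ n) v))] :
    v ∈ f.cesaroConvergent ↔ v ∈ f.boundedOrbits := by
  have key (hv : v ∈ f.sublinearOrbits) : v ∈ f.boundedOrbits ⊓ f.cesaroConvergent :=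
    span_orbit_le_boundedOrbits_inf_cesaroConvergent hf hv (Submodule.subset_span ⟨0, by simp⟩)
  exact ⟨fun h => (key (cesaroConvergent_le_sublinearOrbits h)).1,
    fun h => (key (boundedOrbits_le_sublinearOrbits h)).2⟩

theorem exists_norm_pow_apply_le_mul_norm_iff {v : U} :
    (∃ c : ℝ, ∀ t : ℕ, ‖(f ^ t) v‖ ≤ c * ‖v‖) ↔ v ∈ f.boundedOrbits := by
  refine ⟨fun ⟨c, hc⟩ => ⟨c * ‖v‖, hc⟩, fun ⟨C, hC⟩ => ?_⟩
  rcases eq_or_ne v 0 with rfl | hv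
  · exact ⟨0, by simp⟩
  · exact ⟨C / ‖v‖, fun t => by rw [div_mul_cancel₀ _ (norm_ne_zero_iff.2 hv)]; exact hC t⟩

end Module.End

end Orbits

theorem meanErgodic_iff_stable_of_finiteDimensional_general
    {U : Type*} [NormedAddCommGroup U] [NormedSpace ℂ U]
    (φ : U →L[ℂ] U) (v : U)
    (hfd : FiniteDimensional ℂ (Submodule.span ℂ (Set.range fun t : ℕ => (φ ^ t) v))) :
    (∃ x : U, Tendsto (fun t : ℕ => (t : ℝ)⁻¹ • ∑ m ∈ Finset.Icc 1 t, (φ ^ m) v)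
        atTop (nhds x)) ↔
    (∃ c : ℝ, ∀ t : ℕ, ‖(φ ^ t) v‖ ≤ c * ‖v‖) := by
  have horbit (t : ℕ) : (φ ^ t) v = ((φ : Module.End ℂ U) ^ t) v := by
    rw [← ContinuousLinearMap.toLinearMap_pow]
    rfl
  have havg (t : ℕ) : (t : ℝ)⁻¹ • ∑ m ∈ Finset.Icc 1 t, (φ ^ m) v =
      birkhoffAverage ℝ (φ : Module.End ℂ U) (φ : Module.End ℂ U) t v := by
    rw [Module.End.birkhoffAverage_self_apply, ← Finset.Ico_add_one_right_eq_Icc,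
      sum_Ico_eq_sum_range]
    simp [horbit, add_comm]
  rw [funext horbit] at hfd
  simp_rw [havg, horbit]
  rw [Module.End.exists_norm_pow_apply_le_mul_norm_iff]
  have hcont : Continuous (φ : Module.End ℂ U) := φ.continuous
  exact Module.End.mem_cesaroConvergent_iff_mem_boundedOrbits hcont

/-- A finite-dimensional evolution `(φ, v)` in a complex Banach space is
mean ergodic if and only if it is stable. -/
theorem meanErgodic_iff_stable_of_finiteDimensional
    {U : Type*} [NormedAddCommGroup U] [NormedSpace ℂ U] [CompleteSpace U]
    (φ : U →L[ℂ] U) (v : U)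
    (hfd : FiniteDimensional ℂ (Submodule.span ℂ (Set.range fun t : ℕ => (φ ^ t) v))) :
    (∃ x : U, Tendsto (fun t : ℕ => (t : ℝ)⁻¹ • ∑ m ∈ Finset.Icc 1 t, (φ ^ m) v)
        atTop (nhds x)) ↔
    (∃ c : ℝ, ∀ t : ℕ, ‖(φ ^ t) v‖ ≤ c * ‖v‖) :=
  meanErgodic_iff_stable_of_finiteDimensional_general φ v hfd
end

section
/- Let H be a complex Hilbert space and ψ : H → H a bounded normal operator with operator norm ‖ψ‖ ≤ 1. Then for every s ∈ H the averages (1/t) ∑_{m=1}^t ψ^m s converge in norm as t → ∞ (i.e., every evolution (ψ, s) is mean ergodic). -/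
/-! A contraction `ψ` of a Hilbert space fixes exactly the vectors that `ψ*` fixes, so the
fixed space of `ψ` is the orthogonal complement of `range (ψ - 1)`. On the fixed space the
averages are constant, on `range (ψ - 1)` they telescope to `O(1/t)`, and since they are
uniformly bounded this extends to the closure of that range; hence they converge to the
orthogonal projection onto the fixed space. -/

open Filter Finset

theorem ContinuousLinearMap.sum_Icc_pow_apply_eq_birkhoffSum {R M : Type*} [Semiring R]
    [TopologicalSpace M] [AddCommMonoid M] [Module R M] (f : M →L[R] M) (n : ℕ) (x : M) :
    ∑ m ∈ Icc 1 n, (f ^ m) x = birkhoffSum f id n (f x) := by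
  rw [birkhoffSum, ← Ico_add_one_right_eq_Icc, sum_Ico_eq_sum_range, Nat.add_sub_cancel]
  refine sum_congr rfl fun k _ => ?_
  rw [add_comm, pow_succ, mul_apply_eq_comp, FunLike.coe_pow_eq_iterate, id]

theorem vonNeumann_mean_ergodic_general
    {H : Type*} [NormedAddCommGroup H] [InnerProductSpace ℂ H] [CompleteSpace H]
    (ψ : H →L[ℂ] H)
    (hnorm : ‖ψ‖ ≤ 1) :
    ∀ s : H, ∃ x : H,
      Tendsto (fun t : ℕ => (t : ℝ)⁻¹ • ∑ m ∈ Finset.Icc 1 t, (ψ ^ m) s)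
        atTop (nhds x) := by
  intro s
  refine ⟨_, (ψ.tendsto_birkhoffAverage_orthogonalProjection hnorm (ψ s)).congr fun t => ?_⟩
  rw [birkhoffAverage_congr_ring ℂ ℝ, birkhoffAverage, ψ.sum_Icc_pow_apply_eq_birkhoffSum]

/-- **von Neumann's mean ergodic theorem.** If `ψ` is a bounded normal
operator of norm `‖ψ‖ ≤ 1` on a complex Hilbert space, then every evolution `(ψ, s)` is
mean ergodic: the averages `(1/t) ∑_{m=1}^t ψ^m s` converge in norm. -/
theorem vonNeumann_mean_ergodic
    {H : Type*} [NormedAddCommGroup H] [InnerProductSpace ℂ H] [CompleteSpace H]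
    (ψ : H →L[ℂ] H)
    (hnormal : ψ ∘L ContinuousLinearMap.adjoint ψ = ContinuousLinearMap.adjoint ψ ∘L ψ)
    (hnorm : ‖ψ‖ ≤ 1) :
    ∀ s : H, ∃ x : H,
      Tendsto (fun t : ℕ => (t : ℝ)⁻¹ • ∑ m ∈ Finset.Icc 1 t, (ψ ^ m) s)
        atTop (nhds x) :=
  vonNeumann_mean_ergodic_general ψ hnorm
end

section
/- Let U be a complex Banach space, Ψ = (ψ, s) a finitary evolution in U, A a finite set, and for each a ∈ A let χ_a : U → ℂ be a continuous linear functional such that for every t ≥ 0 the numbers p_a^(t) = χ_a(ψ^t s) are real with p_a^(t) ≥ 0 and ∑_{a∈A} p_a^(t) = 1. Then for each a ∈ A the limit p̄_a = lim_{t→∞} (1/t) ∑_{m=1}^t χ_a(ψ^m s) exists, each p̄_a ≥ 0, and ∑_{a∈A} p̄_a = 1; i.e., the limit distribution (p̄_a)_{a∈A} is a probability distribution on A. -/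
/-!
Project the evolution through the real parts of the observable. The finite-dimensional evolution
`(φ, v)` that approximates `(ψ, s)` yields a bounded sequence `w` whose shifts span a
finite-dimensional space `M`. On `M` the kernel and the range of `shift - 1` meet only in `0`,
because a bounded sequence cannot have constant nonzero increments; hence
`M = ker (shift - 1) ⊕ range (shift - 1)`, so `w` is a constant plus the increments of a bounded
sequence, and its Cesàro means converge. The observed probability vectors differ from `w` by a
null sequence, so they have the same Cesàro limit, which lies in the standard simplex since the
simplex is closed and convex.
-/

open Filter Finset Bornology Topology

section Cesaro

variable {E : Type*} [NormedAddCommGroup E] [NormedSpace ℝ E]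

noncomputable def cesaroMean (u : ℕ → E) (n : ℕ) : E := (n : ℝ)⁻¹ • ∑ i ∈ range n, u i

variable (E) in
def boundedSeqs : Submodule ℝ (ℕ → E) where
  carrier := {u | IsBounded (Set.range u)}
  add_mem' hu hv := (isBounded_add hu hv).subset <|
    Set.range_subset_iff.2 fun t => Set.add_mem_add (Set.mem_range_self t) (Set.mem_range_self t)
  zero_mem' := isBounded_singleton.subset <| Set.range_subset_iff.2 fun _ => rfl
  smul_mem' c _ hu := (hu.smul₀ c).subset <|
    Set.range_subset_iff.2 fun t => Set.smul_mem_smul_set (Set.mem_range_self t)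

def shiftSpan (u : ℕ → E) : Submodule ℝ (ℕ → E) :=
  Submodule.span ℝ (Set.range fun k t => u (t + k))

theorem mem_shiftSpan_self (u : ℕ → E) : u ∈ shiftSpan u :=
  Submodule.subset_span ⟨0, rfl⟩

theorem shiftSpan_le_boundedSeqs {u : ℕ → E} (hu : IsBounded (Set.range u)) :
    shiftSpan u ≤ boundedSeqs E :=
  Submodule.span_le.2 <| Set.range_subset_iff.2 fun k =>
    hu.subset <| Set.range_subset_iff.2 fun t => Set.mem_range_self (t + k)

theorem shift_mem_shiftSpan {u v : ℕ → E} (hv : v ∈ shiftSpan u) :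
    (fun t => v (t + 1)) ∈ shiftSpan u := by
  have : shiftSpan u ≤ (shiftSpan u).comap (LinearMap.funLeft ℝ E (· + 1)) :=
    Submodule.span_le.2 <| Set.range_subset_iff.2 fun k =>
      Submodule.subset_span ⟨k + 1, funext fun t => congrArg u (by dsimp only; omega)⟩
  exact this hv

theorem eq_zero_of_isBounded_of_sub_eq {y : ℕ → E} {c : E} (hy : IsBounded (Set.range y))
    (h : ∀ t, y (t + 1) - y t = c) : c = 0 := by
  obtain ⟨C, hC⟩ := Metric.isBounded_range_iff.1 hy
  have hlin : ∀ n : ℕ, n * ‖c‖ ≤ C := fun n => by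
    simpa [dist_eq_norm, ← sum_range_sub, h, ← Nat.cast_smul_eq_nsmul ℝ, norm_smul] using hC n 0
  by_contra hc
  obtain ⟨n, hn⟩ := exists_nat_gt (C / ‖c‖)
  linarith [(div_lt_iff₀ (norm_pos_iff.2 hc)).1 hn, hlin n]

theorem exists_eq_const_add_sub_of_finiteDimensional {u : ℕ → E} (hu : IsBounded (Set.range u))
    [FiniteDimensional ℝ (shiftSpan u)] :
    ∃ (c : E) (y : ℕ → E), IsBounded (Set.range y) ∧ ∀ t, u t = c + (y (t + 1) - y t) := by
  let τ : shiftSpan u →ₗ[ℝ] shiftSpan u :=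
    (LinearMap.funLeft ℝ E (· + 1)).restrict (fun _ => shift_mem_shiftSpan) - LinearMap.id
  have hτ : ∀ (x : shiftSpan u) t, (τ x : ℕ → E) t = (x : ℕ → E) (t + 1) - (x : ℕ → E) t :=
    fun _ _ => rfl
  have hker : ∀ x : shiftSpan u, x ∈ LinearMap.ker τ → ∀ t, (x : ℕ → E) t = (x : ℕ → E) 0 := by
    intro x hx t
    induction t with
    | zero => rfl
    | succ t ih => rw [← ih, ← sub_eq_zero, ← hτ, LinearMap.mem_ker.1 hx]; rfl
  have hdisj : Disjoint (LinearMap.ker τ) (LinearMap.range τ) := by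
    rw [Submodule.disjoint_def]
    rintro x hx ⟨y, rfl⟩
    have hzero := eq_zero_of_isBounded_of_sub_eq (shiftSpan_le_boundedSeqs hu y.2)
      fun t => (hτ y t).symm.trans (hker _ hx t)
    exact Subtype.ext <| funext fun t => (hker _ hx t).trans hzero
  have hcompl : IsCompl (LinearMap.ker τ) (LinearMap.range τ) :=
    (Submodule.isCompl_iff_disjoint _ _ (by rw [add_comm, τ.finrank_range_add_finrank_ker])).2 hdisj
  obtain ⟨x, _, hx, ⟨y, rfl⟩, hxy⟩ :=
    Submodule.codisjoint_iff_exists_add_eq.1 hcompl.codisjoint ⟨u, mem_shiftSpan_self u⟩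
  refine ⟨(x : ℕ → E) 0, y, shiftSpan_le_boundedSeqs hu y.2, fun t => ?_⟩
  rw [← hker x hx t, ← hτ]
  exact (congrFun (congrArg Subtype.val hxy) t).symm

theorem tendsto_cesaroMean_const_add_sub {c : E} {y : ℕ → E} (hy : IsBounded (Set.range y)) :
    Tendsto (cesaroMean fun t => c + (y (t + 1) - y t)) atTop (𝓝 c) := by
  have htel : ∀ n ≠ 0, cesaroMean (fun t => c + (y (t + 1) - y t)) n
      = c + (n : ℝ)⁻¹ • (y n - y 0) := fun n hn => by
    rw [cesaroMean, sum_add_distrib, sum_range_sub, sum_const, card_range,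
      ← Nat.cast_smul_eq_nsmul ℝ, smul_add, inv_smul_smul₀ (Nat.cast_ne_zero.2 hn)]
  obtain ⟨C, hC⟩ := isBounded_iff_forall_norm_le.1 hy
  have hbdd : IsBoundedUnder (· ≤ ·) atTop (fun n => ‖y n - y 0‖) :=
    ⟨C + C, eventually_map.2 <| .of_forall fun n =>
      (norm_sub_le _ _).trans (add_le_add (hC _ ⟨n, rfl⟩) (hC _ ⟨0, rfl⟩))⟩
  have hsmall := (tendsto_inv_atTop_nhds_zero_nat (𝕜 := ℝ)).zero_smul_isBoundedUnder_le hbdd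
  simpa using (hsmall.const_add c).congr'
    ((eventually_ne_atTop 0).mono fun n hn => (htel n hn).symm)

theorem exists_tendsto_cesaroMean_of_finiteDimensional {u : ℕ → E} (hu : IsBounded (Set.range u))
    [FiniteDimensional ℝ (shiftSpan u)] : ∃ c, Tendsto (cesaroMean u) atTop (𝓝 c) := by
  obtain ⟨c, y, hy, hu_eq⟩ := exists_eq_const_add_sub_of_finiteDimensional hu
  exact ⟨c, funext hu_eq ▸ tendsto_cesaroMean_const_add_sub hy⟩

theorem Filter.Tendsto.cesaroMean_of_tendsto_sub {u w : ℕ → E} {c : E}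
    (hw : Tendsto (cesaroMean w) atTop (𝓝 c)) (huw : Tendsto (u - w) atTop (𝓝 0)) :
    Tendsto (cesaroMean u) atTop (𝓝 c) := by
  have h := hw.add huw.cesaro_smul
  rw [add_zero] at h
  refine h.congr fun n => ?_
  simp only [cesaroMean, Pi.sub_apply, sum_sub_distrib, smul_sub, add_sub_cancel]

theorem Convex.cesaroMean_mem {s : Set E} (hs : Convex ℝ s) {u : ℕ → E} (hu : ∀ t, u t ∈ s)
    {n : ℕ} (hn : n ≠ 0) : cesaroMean u n ∈ s := by
  rw [cesaroMean, smul_sum]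
  exact hs.sum_mem (fun _ _ => by positivity)
    (by rw [sum_const, card_range, nsmul_eq_mul, mul_inv_cancel₀ (Nat.cast_ne_zero.2 hn)])
    fun t _ => hu t

theorem IsClosed.mem_of_tendsto_cesaroMean {s : Set E} (hs : IsClosed s) (hconv : Convex ℝ s)
    {u : ℕ → E} (hu : ∀ t, u t ∈ s) {c : E} (hc : Tendsto (cesaroMean u) atTop (𝓝 c)) : c ∈ s :=
  hs.mem_of_tendsto hc <| (eventually_ne_atTop 0).mono fun _ hn => hconv.cesaroMean_mem hu hn

theorem finiteDimensional_shiftSpan_orbit {V : Type*} [AddCommGroup V] [Module ℝ V]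
    (f : V →ₗ[ℝ] E) (T : V →ₗ[ℝ] V) (v : V)
    [FiniteDimensional ℝ (Submodule.span ℝ (Set.range fun t : ℕ => (T ^ t) v))] :
    FiniteDimensional ℝ (shiftSpan fun t => f ((T ^ t) v)) := by
  let Θ : V →ₗ[ℝ] (ℕ → E) := LinearMap.pi fun t => f ∘ₗ T ^ t
  refine Submodule.finiteDimensional_of_le
    (S₂ := (Submodule.span ℝ (Set.range fun t : ℕ => (T ^ t) v)).map Θ) ?_
  refine Submodule.span_le.2 <| Set.range_subset_iff.2 fun k =>
    ⟨(T ^ k) v, Submodule.subset_span ⟨k, rfl⟩, funext fun t => ?_⟩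
  simp [Θ, pow_add]

end Cesaro

theorem finiteDimensional_span_of_finiteDimensional_span (K L : Type*) {V : Type*} [Field K]
    [Field L] [Algebra K L] [Module.Finite K L] [AddCommGroup V] [Module K V] [Module L V]
    [IsScalarTower K L V] (S : Set V) [FiniteDimensional L (Submodule.span L S)] :
    FiniteDimensional K (Submodule.span K S) := by
  have : FiniteDimensional K ((Submodule.span L S).restrictScalars K) :=
    Module.Finite.iff_fg.2 (Module.Finite.iff_fg.1 ‹_›).restrictScalars
  exact Submodule.finiteDimensional_of_le (Submodule.span_le_restrictScalars K L S)

theorem exists_tendsto_cesaroMean_of_finitary {U E : Type*} [NormedAddCommGroup U]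
    [NormedSpace ℂ U] [NormedAddCommGroup E] [NormedSpace ℝ E] {ψ φ : U →L[ℂ] U} {s v : U}
    [FiniteDimensional ℂ (Submodule.span ℂ (Set.range fun t : ℕ => (φ ^ t) v))]
    (hclose : Tendsto (fun t : ℕ => ‖(ψ ^ t) s - (φ ^ t) v‖) atTop (𝓝 0))
    (X : U →L[ℝ] E) (hX : IsBounded (Set.range fun t => X ((ψ ^ t) s))) :
    ∃ c, Tendsto (cesaroMean fun t => X ((ψ ^ t) s)) atTop (𝓝 c) := by
  set u := fun t => X ((ψ ^ t) s)
  set w := fun t => X ((φ ^ t) v)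
  have huw : Tendsto (u - w) atTop (𝓝 0) := by
    have h := (X.continuous.tendsto 0).comp (tendsto_zero_iff_norm_tendsto_zero.2 hclose)
    rw [map_zero] at h
    exact h.congr fun t => map_sub X _ _
  have hw : IsBounded (Set.range w) :=
    (isBounded_sub hX (Metric.isBounded_range_of_tendsto _ huw)).subset
      (Set.range_subset_iff.2 fun t => ⟨_, ⟨t, rfl⟩, _, ⟨t, rfl⟩, sub_sub_cancel _ _⟩)
  let T : U →ₗ[ℝ] U := (φ : U →ₗ[ℂ] U).restrictScalars ℝ
  have hT : ∀ t : ℕ, (T ^ t) v = (φ ^ t) v := fun t => by simp [T, Module.End.coe_pow]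
  have : FiniteDimensional ℝ (Submodule.span ℝ (Set.range fun t : ℕ => (T ^ t) v)) :=
    funext hT ▸ finiteDimensional_span_of_finiteDimensional_span ℝ ℂ _
  have : FiniteDimensional ℝ (shiftSpan w) := by
    rw [show w = fun t => X ((T ^ t) v) from funext fun t => congrArg X (hT t).symm]
    exact finiteDimensional_shiftSpan_orbit (X : U →ₗ[ℝ] E) T v
  obtain ⟨c, hc⟩ := exists_tendsto_cesaroMean_of_finiteDimensional hw
  exact ⟨c, hc.cesaroMean_of_tendsto_sub huw⟩

theorem limit_distribution_of_observable_general
    {U : Type*} [NormedAddCommGroup U] [NormedSpace ℂ U]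
    (ψ : U →L[ℂ] U) (s : U)
    (hfinitary : ∃ (φ : U →L[ℂ] U) (v : U),
      FiniteDimensional ℂ (Submodule.span ℂ (Set.range fun t : ℕ => (φ ^ t) v)) ∧
      Tendsto (fun t : ℕ => ‖(ψ ^ t) s - (φ ^ t) v‖) atTop (nhds 0))
    {A : Type*} [Fintype A] (χ : A → (U →L[ℂ] ℂ))
    (hpos : ∀ (t : ℕ) (a : A), 0 ≤ (χ a ((ψ ^ t) s)).re)
    (hsum : ∀ t : ℕ, ∑ a : A, χ a ((ψ ^ t) s) = 1) :
    ∃ p : A → ℝ,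
      (∀ a : A,
        Tendsto (fun t : ℕ => (t : ℝ)⁻¹ * ∑ m ∈ Finset.Icc 1 t, (χ a ((ψ ^ m) s)).re)
          atTop (nhds (p a)) ∧ 0 ≤ p a) ∧
      ∑ a : A, p a = 1 := by
  obtain ⟨φ, v, hfd, hclose⟩ := hfinitary
  have hstep : ∀ (T : U →L[ℂ] U) (x : U) (t : ℕ), (T ^ t) (T x) = (T ^ (t + 1)) x := by
    simp [pow_succ]
  have : FiniteDimensional ℂ (Submodule.span ℂ (Set.range fun t : ℕ => (φ ^ t) (φ v))) :=
    Submodule.finiteDimensional_of_le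
      (S₂ := Submodule.span ℂ (Set.range fun t : ℕ => (φ ^ t) v)) <| Submodule.span_mono <|
        Set.range_subset_iff.2 fun t => ⟨t + 1, (hstep φ v t).symm⟩
  let X : U →L[ℝ] (A → ℝ) := .pi fun a => Complex.reCLM.comp ((χ a).restrictScalars ℝ)
  have hu : ∀ t, X ((ψ ^ t) (ψ s)) ∈ stdSimplex ℝ A := fun t => by
    rw [hstep]
    exact ⟨fun a => hpos (t + 1) a, by simpa [X] using congrArg Complex.re (hsum (t + 1))⟩
  have hclose' : Tendsto (fun t => ‖(ψ ^ t) (ψ s) - (φ ^ t) (φ v)‖) atTop (𝓝 0) := by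
    simpa only [hstep] using (tendsto_add_atTop_iff_nat 1).2 hclose
  obtain ⟨p, hp⟩ := exists_tendsto_cesaroMean_of_finitary hclose' X
    ((bounded_stdSimplex A).subset (Set.range_subset_iff.2 hu))
  obtain ⟨hp_nonneg, hp_sum⟩ :=
    (isClosed_stdSimplex ℝ A).mem_of_tendsto_cesaroMean (convex_stdSimplex ℝ A) hu hp
  refine ⟨p, fun a => ⟨?_, hp_nonneg a⟩, hp_sum⟩
  refine (((continuous_apply a).tendsto p).comp hp).congr fun n => ?_
  rw [Function.comp_apply, cesaroMean, Pi.smul_apply, Finset.sum_apply, smul_eq_mul,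
    ← Ico_add_one_right_eq_Icc, sum_Ico_eq_sum_range, Nat.add_sub_cancel]
  simp [X, hstep, add_comm]

/-- Let `(ψ, s)` be a finitary evolution in a complex Banach space and let
`{χ_a : a ∈ A}` (with `A` finite) be an observable: each `χ_a(ψ^t s)` is a nonnegative real
number and `∑_a χ_a(ψ^t s) = 1` for every `t`. Then the averaged observation probabilities
converge to a limit distribution `p̄` on `A`: each `p̄_a ≥ 0` exists as the limit of
`(1/t) ∑_{m=1}^t χ_a(ψ^m s)` and `∑_a p̄_a = 1`. -/
theorem limit_distribution_of_observable
    {U : Type*} [NormedAddCommGroup U] [NormedSpace ℂ U] [CompleteSpace U]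
    (ψ : U →L[ℂ] U) (s : U)
    (hfinitary : ∃ (φ : U →L[ℂ] U) (v : U),
      FiniteDimensional ℂ (Submodule.span ℂ (Set.range fun t : ℕ => (φ ^ t) v)) ∧
      Tendsto (fun t : ℕ => ‖(ψ ^ t) s - (φ ^ t) v‖) atTop (nhds 0))
    {A : Type*} [Fintype A] (χ : A → (U →L[ℂ] ℂ))
    (hreal : ∀ (t : ℕ) (a : A), (χ a ((ψ ^ t) s)).im = 0)
    (hpos : ∀ (t : ℕ) (a : A), 0 ≤ (χ a ((ψ ^ t) s)).re)
    (hsum : ∀ t : ℕ, ∑ a : A, χ a ((ψ ^ t) s) = 1) :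
    ∃ p : A → ℝ,
      (∀ a : A,
        Tendsto (fun t : ℕ => (t : ℝ)⁻¹ * ∑ m ∈ Finset.Icc 1 t, (χ a ((ψ ^ m) s)).re)
          atTop (nhds (p a)) ∧ 0 ≤ p a) ∧
      ∑ a : A, p a = 1 :=
  limit_distribution_of_observable_general ψ s hfinitary χ hpos hsum
end

section
/- Let (Ω, Σ, μ) be a measure space, g : Ω → ℂ a measurable function with |g(ω)| ≤ 1 for almost every ω, and f ∈ L²(μ). Then the averages (1/n) ∑_{m=1}^n g^m · f converge in the L²-norm to the function π(f) defined by π(f)(ω) = f(ω) if g(ω) = 1 and π(f)(ω) = 0 otherwise. -/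
/-! For `‖z‖ ≤ 1` the averages `(1/n) ∑_{m=1}^n z^m` are bounded by `1` and tend to `1` if
`z = 1` and to `0` otherwise, since for `z ≠ 1` the geometric sum is bounded by `2 / ‖z - 1‖`.
So the integrand is `c_n(g ω) f ω`, where `c_n(z)` is that average minus `[z = 1]`; then
`|c_n ∘ g| ≤ 2` and `c_n ∘ g → 0` a.e., and dominated convergence with the dominating function
`2 |f| ∈ L²` gives convergence in `L²`. -/

open Filter Finset MeasureTheory

open scoped ENNReal Topology

section DominatedConvergence

variable {α : Type*} [MeasurableSpace α] {μ : Measure α} {p : ℝ≥0∞}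

theorem tendsto_eLpNorm_zero_of_dominated {E : Type*} [NormedAddCommGroup E] (hp0 : p ≠ 0)
    (hp : p ≠ ∞) {F : ℕ → α → E} {bound : α → ℝ} (hF : ∀ n, AEStronglyMeasurable (F n) μ)
    (hbound : MemLp bound p μ) (h_bound : ∀ n, ∀ᵐ a ∂μ, ‖F n a‖ ≤ bound a)
    (h_lim : ∀ᵐ a ∂μ, Tendsto (fun n => F n a) atTop (𝓝 0)) :
    Tendsto (fun n => eLpNorm (F n) p μ) atTop (𝓝 0) := by
  have hq : 0 < p.toReal := ENNReal.toReal_pos hp0 hp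
  have h_int : Tendsto (fun n => ∫⁻ a, ‖F n a‖ₑ ^ p.toReal ∂μ) atTop (𝓝 0) := by
    have h_fin : ∫⁻ a, ‖bound a‖ₑ ^ p.toReal ∂μ ≠ ∞ :=
      ((eLpNorm_lt_top_iff_lintegral_rpow_enorm_lt_top hp0 hp).1 hbound.eLpNorm_lt_top).ne
    have h_le : ∀ n, (fun a => ‖F n a‖ₑ ^ p.toReal) ≤ᵐ[μ] fun a => ‖bound a‖ₑ ^ p.toReal := by
      intro n
      filter_upwards [h_bound n] with a ha
      exact ENNReal.rpow_le_rpow (enorm_le_iff_norm_le.2 (ha.trans (Real.le_norm_self _))) hq.le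
    have h_ptwise : ∀ᵐ a ∂μ, Tendsto (fun n => ‖F n a‖ₑ ^ p.toReal) atTop (𝓝 0) := by
      filter_upwards [h_lim] with a ha
      simpa [hq] using ha.enorm.ennrpow_const p.toReal
    simpa using tendsto_lintegral_of_dominated_convergence' _
      (fun n => (hF n).enorm.pow_const _) h_le h_fin h_ptwise
  simp_rw [eLpNorm_eq_lintegral_rpow_enorm_toReal hp0 hp]
  simpa [hq] using h_int.ennrpow_const p.toReal⁻¹

theorem tendsto_eLpNorm_mul_zero_of_bounded {R : Type*} [NormedRing R] (hp0 : p ≠ 0)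
    (hp : p ≠ ∞) {c : ℕ → α → R} {C : ℝ} {f : α → R}
    (hc : ∀ n, AEStronglyMeasurable (c n) μ) (hcC : ∀ n, ∀ᵐ a ∂μ, ‖c n a‖ ≤ C)
    (hc0 : ∀ᵐ a ∂μ, Tendsto (fun n => c n a) atTop (𝓝 0)) (hf : MemLp f p μ) :
    Tendsto (fun n => eLpNorm (fun a => c n a * f a) p μ) atTop (𝓝 0) := by
  refine tendsto_eLpNorm_zero_of_dominated hp0 hp (fun n => (hc n).mul hf.1)
    (hf.norm.const_mul C) (fun n => ?_) ?_
  · filter_upwards [hcC n] with a ha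
    exact (norm_mul_le _ _).trans (mul_le_mul_of_nonneg_right ha (norm_nonneg _))
  · filter_upwards [hc0] with a ha
    simpa using ha.mul_const (f a)

end DominatedConvergence

section PowAverage

variable {𝕜 : Type*} [RCLike 𝕜]

def powAverage (n : ℕ) (z : 𝕜) : 𝕜 := (n : 𝕜)⁻¹ * ∑ m ∈ Icc 1 n, z ^ m

theorem continuous_powAverage (n : ℕ) : Continuous (powAverage (𝕜 := 𝕜) n) := by
  unfold powAverage
  fun_prop

theorem powAverage_one {n : ℕ} (hn : n ≠ 0) : powAverage n (1 : 𝕜) = 1 := by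
  simp [powAverage, hn]

theorem norm_powAverage_le_one {z : 𝕜} (hz : ‖z‖ ≤ 1) (n : ℕ) : ‖powAverage n z‖ ≤ 1 := by
  rcases eq_or_ne n 0 with rfl | hn
  · simp [powAverage]
  have h_sum : ‖∑ m ∈ Icc 1 n, z ^ m‖ ≤ n := by
    calc ‖∑ m ∈ Icc 1 n, z ^ m‖ ≤ ∑ m ∈ Icc 1 n, ‖z‖ ^ m :=
          norm_sum_le_of_le _ fun m _ => (norm_pow z m).le
      _ ≤ ∑ m ∈ Icc 1 n, 1 := sum_le_sum fun m _ => pow_le_one₀ (norm_nonneg z) hz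
      _ = n := by simp
  rw [powAverage, norm_mul, norm_inv, RCLike.norm_natCast]
  exact inv_mul_le_one_of_le₀ h_sum (Nat.cast_nonneg n)

theorem norm_powAverage_le_of_ne_one {z : 𝕜} (hz : ‖z‖ ≤ 1) (hz1 : z ≠ 1) (n : ℕ) :
    ‖powAverage n z‖ ≤ (n : ℝ)⁻¹ * (2 / ‖z - 1‖) := by
  have h_geom : ∑ m ∈ Icc 1 n, z ^ m = (z ^ (n + 1) - z) / (z - 1) := by
    simpa [Ico_add_one_right_eq_Icc] using geom_sum_Ico hz1 (Nat.le_add_left 1 n)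
  have h_num : ‖z ^ (n + 1) - z‖ ≤ 2 := by
    calc ‖z ^ (n + 1) - z‖ ≤ ‖z‖ ^ (n + 1) + ‖z‖ := by simpa using norm_sub_le (z ^ (n + 1)) z
      _ ≤ 1 + 1 := add_le_add (pow_le_one₀ (norm_nonneg z) hz) hz
      _ = 2 := one_add_one_eq_two
  rw [powAverage, h_geom, norm_mul, norm_inv, RCLike.norm_natCast, norm_div]
  gcongr

theorem tendsto_powAverage {z : 𝕜} (hz : ‖z‖ ≤ 1) :
    Tendsto (fun n => powAverage n z) atTop (𝓝 (if z = 1 then 1 else 0)) := by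
  split_ifs with hz1
  · subst hz1
    exact tendsto_const_nhds.congr' <|
      (eventually_ne_atTop 0).mono fun n hn => (powAverage_one hn).symm
  · rw [tendsto_zero_iff_norm_tendsto_zero]
    refine squeeze_zero (fun n => norm_nonneg _) (norm_powAverage_le_of_ne_one hz hz1) ?_
    simpa using tendsto_inv_atTop_nhds_zero_nat.mul_const (2 / ‖z - 1‖)

end PowAverage

/-- Let `g : Ω → ℂ` be measurable with `|g| ≤ 1` a.e. and `f ∈ L²(μ)`.
Then the averages `(1/n) ∑_{m=1}^n g^m · f` converge in the `L²`-norm to the function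
`π(f)` defined by `π(f)(ω) = f(ω)` if `g(ω) = 1` and `π(f)(ω) = 0` otherwise. -/
theorem multiplication_averages_tendsto_projection
    {Ω : Type*} [MeasurableSpace Ω] (μ : Measure Ω)
    (g : Ω → ℂ) (hg : Measurable g) (hg1 : ∀ᵐ ω ∂μ, ‖g ω‖ ≤ 1)
    (f : Ω → ℂ) (hf : MemLp f 2 μ) :
    Tendsto
      (fun n : ℕ =>
        eLpNorm
          (fun ω =>
            (n : ℂ)⁻¹ * (∑ m ∈ Finset.Icc 1 n, g ω ^ m) * f ω -
              (if g ω = 1 then f ω else 0))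
          2 μ)
      atTop (nhds 0) := by
  set c : ℕ → Ω → ℂ := fun n ω => powAverage n (g ω) - if g ω = 1 then 1 else 0
  have hc_meas : ∀ n, AEStronglyMeasurable (c n) μ := fun n =>
    Measurable.aestronglyMeasurable <| ((continuous_powAverage n).measurable.comp hg).sub <|
      Measurable.ite (hg (measurableSet_singleton 1)) measurable_const measurable_const
  have hc_le : ∀ n, ∀ᵐ ω ∂μ, ‖c n ω‖ ≤ 2 := fun n => by
    filter_upwards [hg1] with ω hω
    calc ‖c n ω‖ ≤ 1 + 1 := (norm_sub_le _ _).trans <|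
          add_le_add (norm_powAverage_le_one hω n) (by split_ifs <;> simp)
      _ = 2 := one_add_one_eq_two
  have hc_lim : ∀ᵐ ω ∂μ, Tendsto (fun n => c n ω) atTop (𝓝 0) := by
    filter_upwards [hg1] with ω hω
    simpa using (tendsto_powAverage hω).sub_const (if g ω = 1 then 1 else 0)
  refine (tendsto_eLpNorm_mul_zero_of_bounded two_ne_zero ENNReal.ofNat_ne_top hc_meas hc_le
    hc_lim hf).congr fun n => ?_
  congr 1 with ω
  simp only [c, powAverage]
  split_ifs <;> ring
end
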